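/- arXiv:2203.06660 — 6 statements merged into one kernel-verified Lean document; each statement's English description precedes it below -/
import Mathlib

section
/- In any instance of the marriage model of HRT-MSLQ (every hospital has upper quota 1 and lower quota 0 or 1), the ratio of the score of any stable matching N to the score of any stable matching M is at most 2, provided both scores are defined (the instance has at least one hospital with lower quota 1 matched or unmatched appropriately so scores are positive). Formally, if N and M are stable matchings with s(M) > 0, then s(N)/s(M) ≤ 2. -/
/-- An instance of the Hospitals/Residents problem with ties, incomplete lists,
and lower/upper quotas (HRT-MSLQ).  Preferences are given by rank functions
(smaller rank = more preferred); ties are allowed (equal ranks). -/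
structure HRTInstance (R H : Type) [Fintype R] [DecidableEq R] [Fintype H] [DecidableEq H] where
  acc : R → H → Prop
  rRank : R → H → ℕ
  hRank : H → R → ℕ
  lq : H → ℕ
  uq : H → ℕ

namespace HRTInstance

variable {R H : Type} [Fintype R] [DecidableEq R] [Fintype H] [DecidableEq H]

/-- The set of residents assigned to hospital `h` by assignment `M`. -/
def assignees (M : R → Option H) (h : H) : Finset R :=
  Finset.univ.filter (fun r => M r = some h)

/-- `M` is a matching: it respects acceptability and upper quotas. -/
def IsMatching (I : HRTInstance R H) (M : R → Option H) : Prop :=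
  (∀ r h, M r = some h → I.acc r h) ∧ ∀ h, (assignees M h).card ≤ I.uq h

/-- `(r, h)` is a blocking pair for `M`. -/
def Blocks (I : HRTInstance R H) (M : R → Option H) (r : R) (h : H) : Prop :=
  I.acc r h ∧
  (M r = none ∨ ∃ h', M r = some h' ∧ I.rRank r h < I.rRank r h') ∧
  ((assignees M h).card < I.uq h ∨ ∃ r' ∈ assignees M h, I.hRank h r < I.hRank h r')

/-- `M` is a stable matching. -/
def IsStable (I : HRTInstance R H) (M : R → Option H) : Prop :=
  I.IsMatching M ∧ ∀ r h, ¬ I.Blocks M r h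

/-- The total satisfaction ratio (score) of `M`:
`s(M) = Σ_h min{1, |M(h)|/ℓ(h)}`, with score `1` when `ℓ(h) = 0`. -/
def score (I : HRTInstance R H) (M : R → Option H) : ℚ :=
  ∑ h, if I.lq h = 0 then 1
       else min 1 (((assignees M h).card : ℚ) / (I.lq h : ℚ))

end HRTInstance

/-!
With lower quotas at most 1 the score of a matching is the number of hospitals that have lower
quota 0 or are matched. A hospital matched in `N` but not in `M` has an `N`-partner who, by
stability of `M`, is matched in `M` to some other hospital; since all quotas are 1 this charges
such hospitals injectively to hospitals matched in `M`. Hence `s(N) ≤ s(M) + s(M)`.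
-/

namespace HRTInstance

open Finset

variable {R H : Type} [Fintype R] [DecidableEq H]

theorem mem_assignees {M : R → Option H} {h : H} {r : R} : r ∈ assignees M h ↔ M r = some h := by
  simp [assignees]

variable [DecidableEq R] [Fintype H]

def matched (P : R → Option H) : Finset H :=
  {h | (assignees P h).Nonempty}

def satisfied (I : HRTInstance R H) (P : R → Option H) : Finset H :=
  {h | I.lq h = 0 ∨ (assignees P h).Nonempty}

theorem score_eq_card_satisfied (I : HRTInstance R H) (hl : ∀ h, I.lq h ≤ 1)
    (P : R → Option H) : I.score P = #(I.satisfied P) := by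
  rw [score, satisfied, card_filter]
  push_cast
  refine sum_congr rfl fun h _ => ?_
  rcases Nat.le_one_iff_eq_zero_or_eq_one.mp (hl h) with h0 | h1
  · simp [h0]
  · rcases (assignees P h).eq_empty_or_nonempty with hempty | hne
    · simp [h1, hempty]
    · have : (1 : ℚ) ≤ #(assignees P h) := by exact_mod_cast hne.card_pos
      simp [h1, hne, this]

theorem card_assignees_le_one {I : HRTInstance R H} (hu : ∀ h, I.uq h = 1) {P : R → Option H}
    (hP : I.IsMatching P) (h : H) : #(assignees P h) ≤ 1 :=
  hu h ▸ hP.2 h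

theorem isSome_of_acc_of_assignees_eq_empty {I : HRTInstance R H} {M : R → Option H}
    (hM : I.IsStable M) {r : R} {h : H} (hacc : I.acc r h) (hquota : 0 < I.uq h)
    (hempty : assignees M h = ∅) : (M r).isSome := by
  by_contra hnone
  exact hM.2 r h ⟨hacc, Or.inl (Option.not_isSome_iff_eq_none.mp hnone),
    Or.inl (by simpa [hempty] using hquota)⟩

theorem card_matched_sdiff_le {I : HRTInstance R H} (hu : ∀ h, I.uq h = 1)
    {N M : R → Option H} (hN : I.IsMatching N) (hM : I.IsStable M) :
    #(matched N \ matched M) ≤ #(matched M) := by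
  refine card_le_card_of_forall_subsingleton (fun h h' => ∃ r, N r = some h ∧ M r = some h')
    (fun h hh => ?_) (fun h' _ => ?_)
  · simp only [matched, mem_sdiff, mem_filter, mem_univ, true_and,
      not_nonempty_iff_eq_empty] at hh
    obtain ⟨⟨r, hr⟩, hempty⟩ := hh
    rw [mem_assignees] at hr
    obtain ⟨h', hr'⟩ := Option.isSome_iff_exists.mp
      (isSome_of_acc_of_assignees_eq_empty hM (hN.1 r h hr) (by simp [hu]) hempty)
    exact ⟨h', mem_filter.mpr ⟨mem_univ _, r, mem_assignees.mpr hr'⟩, r, hr, hr'⟩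
  · rintro h₁ ⟨-, r₁, hN₁, hM₁⟩ h₂ ⟨-, r₂, hN₂, hM₂⟩
    have : r₁ = r₂ := card_le_one.mp (card_assignees_le_one hu hM.1 h')
      r₁ (mem_assignees.mpr hM₁) r₂ (mem_assignees.mpr hM₂)
    subst this
    exact Option.some_injective _ (hN₁.symm.trans hN₂)

theorem card_satisfied_le_two_mul {I : HRTInstance R H} (hu : ∀ h, I.uq h = 1)
    {N M : R → Option H} (hN : I.IsMatching N) (hM : I.IsStable M) :
    #(I.satisfied N) ≤ 2 * #(I.satisfied M) := by
  have hcover : I.satisfied N ⊆ I.satisfied M ∪ (matched N \ matched M) := by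
    intro h
    simp only [satisfied, matched, mem_union, mem_sdiff, mem_filter, mem_univ, true_and]
    tauto
  have hmatched : matched M ⊆ I.satisfied M := by
    intro h
    simp only [satisfied, matched, mem_filter, mem_univ, true_and]
    exact Or.inr
  calc #(I.satisfied N)
      ≤ #(I.satisfied M) + #(matched N \ matched M) :=
        (card_le_card hcover).trans (card_union_le _ _)
    _ ≤ #(I.satisfied M) + #(I.satisfied M) :=
        Nat.add_le_add_left ((card_matched_sdiff_le hu hN hM).trans (card_le_card hmatched)) _
    _ = 2 * #(I.satisfied M) := by ring

end HRTInstance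

/-- In the marriage model (every hospital has upper quota 1 and lower quota 0 or 1),
for any stable matchings `N` and `M` with `s(M) > 0` we have `s(N)/s(M) ≤ 2`. -/
theorem stmt_1 {R H : Type} [Fintype R] [DecidableEq R] [Fintype H] [DecidableEq H]
    (I : HRTInstance R H)
    (hu : ∀ h, I.uq h = 1) (hl : ∀ h, I.lq h ≤ 1)
    (N M : R → Option H) (hN : I.IsStable N) (hM : I.IsStable M)
    (hpos : 0 < I.score M) :
    I.score N / I.score M ≤ 2 := by
  rw [div_le_iff₀ hpos, I.score_eq_card_satisfied hl, I.score_eq_card_satisfied hl]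
  exact_mod_cast HRTInstance.card_satisfied_le_two_mul hu hN.1 hM
end

section
/- Let I be an instance of the uniform model of HRT-MSLQ where every hospital has lower quota ℓ and upper quota u, and let θ = u/ℓ. Then for any two stable matchings N and M of I, s(N)/s(M) ≤ θ + 1. -/
/-- Uniform model: all hospitals share quotas `[ℓ,u]` with `1 ≤ ℓ ≤ u`.  For any two
stable matchings `N` and `M`, `s(N)/s(M) ≤ θ + 1` where `θ = u/ℓ`. -/
theorem stmt_3 {R H : Type} [Fintype R] [DecidableEq R] [Fintype H] [DecidableEq H]
    (I : HRTInstance R H) (l u : ℕ) (hl : 1 ≤ l) (hlu : l ≤ u)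
    (hlq : ∀ h, I.lq h = l) (huq : ∀ h, I.uq h = u)
    (N M : R → Option H) (hN : I.IsStable N) (hM : I.IsStable M) :
    I.score N / I.score M ≤ (u : ℚ) / (l : ℚ) + 1 := by
  classical
  obtain ⟨⟨hNm, hNu⟩, hNs⟩ := hN
  obtain ⟨⟨hMm, hMu⟩, hMs⟩ := hM
  have hlpos : (0:ℚ) < (l:ℚ) := by exact_mod_cast hl
  have hlne : l ≠ 0 := by omega
  -- residents matched in N but unmatched in M force their N-hospital full in M
  have hfull : ∀ r h, N r = some h → M r = none →
      l ≤ (HRTInstance.assignees M h).card := by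
    intro r h hr hmr
    by_contra hc
    push_neg at hc
    exact hMs r h ⟨hNm r h hr, Or.inl hmr, Or.inl (by rw [huq h]; omega)⟩
  set A : H → Finset R :=
    fun h => (HRTInstance.assignees N h).filter (fun r => (M r).isSome) with hA
  have termM_nonneg : ∀ h : H,
      (0:ℚ) ≤ min 1 (((HRTInstance.assignees M h).card : ℚ) / (l:ℚ)) := by
    intro h
    apply le_min (by norm_num)
    positivity
  -- scores rewritten with the uniform quota
  have hscoreN : I.score N =
      ∑ h, min 1 (((HRTInstance.assignees N h).card : ℚ) / (l:ℚ)) := by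
    unfold HRTInstance.score
    apply Finset.sum_congr rfl
    intro h _
    rw [hlq h, if_neg hlne]
  have hscoreM : I.score M =
      ∑ h, min 1 (((HRTInstance.assignees M h).card : ℚ) / (l:ℚ)) := by
    unfold HRTInstance.score
    apply Finset.sum_congr rfl
    intro h _
    rw [hlq h, if_neg hlne]
  have hsM_nonneg : 0 ≤ I.score M := by
    rw [hscoreM]; exact Finset.sum_nonneg fun h _ => termM_nonneg h
  -- per-hospital bound
  have hper : ∀ h : H,
      min 1 (((HRTInstance.assignees N h).card : ℚ) / (l:ℚ)) ≤
      min 1 (((HRTInstance.assignees M h).card : ℚ) / (l:ℚ)) + ((A h).card : ℚ) / (l:ℚ) := by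
    intro h
    by_cases hcase : ∀ r ∈ HRTInstance.assignees N h, (M r).isSome
    · have hAeq : A h = HRTInstance.assignees N h := by
        rw [hA]
        exact Finset.filter_true_of_mem hcase
      rw [hAeq]
      have : min 1 (((HRTInstance.assignees N h).card : ℚ) / (l:ℚ)) ≤
          ((HRTInstance.assignees N h).card : ℚ) / (l:ℚ) := min_le_right _ _
      linarith [termM_nonneg h]
    · push_neg at hcase
      obtain ⟨r, hr, hrm⟩ := hcase
      have hrnone : M r = none := by
        cases hmr : M r with
        | none => rfl
        | some h' => exact absurd (by rw [hmr]; rfl) hrm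
      have hrN : N r = some h := by
        have := hr
        simp [HRTInstance.assignees] at this
        exact this
      have hfull' : l ≤ (HRTInstance.assignees M h).card := hfull r h hrN hrnone
      have h1 : min 1 (((HRTInstance.assignees M h).card : ℚ) / (l:ℚ)) = 1 := by
        apply min_eq_left
        rw [le_div_iff₀ hlpos, one_mul]
        exact_mod_cast hfull'
      rw [h1]
      have hle : min 1 (((HRTInstance.assignees N h).card : ℚ) / (l:ℚ)) ≤ 1 :=
        min_le_left _ _
      have : (0:ℚ) ≤ ((A h).card : ℚ) / (l:ℚ) := by positivity
      linarith
  have hsum1 : I.score N ≤ I.score M + (∑ h, ((A h).card : ℚ)) / (l:ℚ) := by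
    rw [hscoreN, hscoreM, Finset.sum_div, ← Finset.sum_add_distrib]
    exact Finset.sum_le_sum fun h _ => hper h
  -- ∑ |A h| ≤ ∑ |M(h)|
  have hdisjA : ∀ h₁ ∈ (Finset.univ : Finset H), ∀ h₂ ∈ Finset.univ, h₁ ≠ h₂ →
      Disjoint (A h₁) (A h₂) := by
    intro h₁ _ h₂ _ hne
    rw [Finset.disjoint_left]
    intro r hr1 hr2
    rw [hA] at hr1 hr2
    simp [HRTInstance.assignees] at hr1 hr2
    exact hne (by rw [← Option.some_inj, ← hr1.1, hr2.1])
  have hdisjM : ∀ h₁ ∈ (Finset.univ : Finset H), ∀ h₂ ∈ Finset.univ, h₁ ≠ h₂ →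
      Disjoint (HRTInstance.assignees M h₁) (HRTInstance.assignees M h₂) := by
    intro h₁ _ h₂ _ hne
    rw [Finset.disjoint_left]
    intro r hr1 hr2
    simp [HRTInstance.assignees] at hr1 hr2
    exact hne (by rw [← Option.some_inj, ← hr1, hr2])
  have hsumA : ∑ h, (A h).card ≤ ∑ h, (HRTInstance.assignees M h).card := by
    rw [← Finset.card_biUnion hdisjA, ← Finset.card_biUnion hdisjM]
    apply Finset.card_le_card
    intro r hr
    simp only [Finset.mem_biUnion] at hr ⊢
    obtain ⟨h, _, hrA⟩ := hr
    rw [hA] at hrA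
    simp only [Finset.mem_filter] at hrA
    obtain ⟨h', hh'⟩ := Option.isSome_iff_exists.mp hrA.2
    exact ⟨h', Finset.mem_univ _, by simp [HRTInstance.assignees, hh']⟩
  -- ∑ |M(h)| ≤ u * score M
  have hMu_bound : ∀ h : H, ((HRTInstance.assignees M h).card : ℚ) ≤
      (u:ℚ) * min 1 (((HRTInstance.assignees M h).card : ℚ) / (l:ℚ)) := by
    intro h
    set c := (HRTInstance.assignees M h).card with hc
    have hcu : c ≤ u := by rw [← huq h]; exact hMu h
    by_cases hcl : c ≤ l
    · have : min 1 ((c:ℚ)/(l:ℚ)) = (c:ℚ)/(l:ℚ) := by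
        apply min_eq_right
        rw [div_le_one hlpos]
        exact_mod_cast hcl
      rw [this, mul_div_assoc', le_div_iff₀ hlpos]
      have hcl' : (l:ℚ) ≤ u := by exact_mod_cast hlu
      have hc0 : (0:ℚ) ≤ c := by positivity
      nlinarith
    · push_neg at hcl
      have : min 1 ((c:ℚ)/(l:ℚ)) = 1 := by
        apply min_eq_left
        rw [le_div_iff₀ hlpos, one_mul]
        exact_mod_cast le_of_lt hcl
      rw [this, mul_one]
      exact_mod_cast hcu
  have hsumM : (∑ h, ((HRTInstance.assignees M h).card : ℚ)) ≤ (u:ℚ) * I.score M := by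
    rw [hscoreM, Finset.mul_sum]
    exact Finset.sum_le_sum fun h _ => hMu_bound h
  have key : I.score N ≤ ((u:ℚ)/(l:ℚ) + 1) * I.score M := by
    have h1 : (∑ h, ((A h).card : ℚ)) ≤ ∑ h, ((HRTInstance.assignees M h).card : ℚ) := by
      exact_mod_cast hsumA
    calc I.score N ≤ I.score M + (∑ h, ((A h).card : ℚ)) / (l:ℚ) := hsum1
      _ ≤ I.score M + (u:ℚ) * I.score M / (l:ℚ) := by
          gcongr
          linarith
      _ = ((u:ℚ)/(l:ℚ) + 1) * I.score M := by ring
  rcases eq_or_lt_of_le hsM_nonneg with h0 | hpos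
  · rw [← h0, div_zero]
    positivity
  · rw [div_le_iff₀ hpos]
    exact key
end

section
/- For positive integers ℓ ≤ u with θ = u/ℓ, there exists an instance of the uniform model of HRT-MSLQ with strict residents' preference lists and two stable matchings N and M satisfying s(N) = θ + 1 and s(M) = 1. Concretely: residents r_1,…,r_u and r'_1,…,r'_u; hospitals h_1,…,h_u and x, all with quotas [ℓ,u]; r_i prefers x to h_i, r'_i accepts only x; h_i accepts only r_i; x is indifferent among all residents. Then N = {(r_i,h_i) : i} ∪ {(r'_i,x) : i} and M = {(r_i,x) : i} are stable, with s(N) = u/ℓ + 1 and s(M) = 1. -/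
/-- Residents `r_i = .inl i` and `r'_i = .inr i`; hospitals `h_i = .inl i` and `x = .inr ()`,
all with quotas `[ℓ,u]`.  `r_i` prefers `x` to `h_i`, `r'_i` accepts only `x`;
`h_i` accepts only `r_i`; `x` is indifferent among all residents. -/
def I4 (l u : ℕ) : HRTInstance (Fin u ⊕ Fin u) (Fin u ⊕ Unit) where
  acc r h := match r, h with
    | .inl i, .inl j => i = j
    | .inl _, .inr _ => True
    | .inr _, .inl _ => False
    | .inr _, .inr _ => True
  rRank _ h := match h with
    | .inl _ => 1
    | .inr _ => 0
  hRank _ _ := 0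
  lq _ := l
  uq _ := u

def N4 (u : ℕ) : (Fin u ⊕ Fin u) → Option (Fin u ⊕ Unit)
  | .inl i => some (.inl i)
  | .inr _ => some (.inr ())

def M4 (u : ℕ) : (Fin u ⊕ Fin u) → Option (Fin u ⊕ Unit)
  | .inl _ => some (.inr ())
  | .inr _ => none

/-! In both matchings `x` is filled to its upper quota `u` by residents it ranks equally, so no
pair involving `x` blocks; the only other acceptable pairs are the `(r_i, h_i)`, and `r_i` already
holds `h_i` (in `N`) or the preferred `x` (in `M`). For the scores, `x` contributes
`min 1 (u/ℓ) = 1` to both, while each `h_i` contributes `1/ℓ` under `N` and `0` under `M`. -/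

open Finset

namespace HRTInstance

variable {R H : Type} [Fintype R] [DecidableEq R] [Fintype H] [DecidableEq H]
  (I : HRTInstance R H) {M : R → Option H} {r : R} {h : H}

theorem not_blocks_of_not_acc (hacc : ¬ I.acc r h) : ¬ I.Blocks M r h :=
  fun hb => hacc hb.1

theorem not_blocks_of_rRank_le {h' : H} (hM : M r = some h') (hle : I.rRank r h' ≤ I.rRank r h) :
    ¬ I.Blocks M r h := by
  rintro ⟨-, hr | ⟨h'', hM', hlt⟩, -⟩
  · simp [hM] at hr
  · obtain rfl : h' = h'' := Option.some_injective _ (hM.symm.trans hM')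
    omega

theorem not_blocks_of_full (hfull : I.uq h ≤ #(assignees M h))
    (hindiff : ∀ r' ∈ assignees M h, I.hRank h r' ≤ I.hRank h r) : ¬ I.Blocks M r h := by
  rintro ⟨-, -, hroom | ⟨r', hr', hlt⟩⟩
  · omega
  · exact absurd (hindiff r' hr') (not_le.mpr hlt)

theorem score_eq_sum_min_of_lq_eq {l : ℕ} (hl : l ≠ 0) (hlq : ∀ h, I.lq h = l) (M : R → Option H) :
    I.score M = ∑ h, min 1 ((#(assignees M h) : ℚ) / l) := by
  simp only [score, hlq, hl, if_false]

end HRTInstance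

theorem min_one_natCast_div_eq_one {n l : ℕ} (hl : 0 < l) (hln : l ≤ n) : min 1 ((n : ℚ) / l) = 1 :=
  min_eq_left <| (one_le_div₀ (by exact_mod_cast hl)).mpr (by exact_mod_cast hln)

theorem min_one_inv_natCast {l : ℕ} (hl : 0 < l) : min 1 ((l : ℚ)⁻¹) = (l : ℚ)⁻¹ :=
  min_eq_right <| inv_le_one_of_one_le₀ (by exact_mod_cast hl)

open HRTInstance

section UniformInstance

variable (u : ℕ)

theorem assignees_N4_inl (j : Fin u) : assignees (N4 u) (.inl j) = {.inl j} := by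
  ext (i | i) <;> simp [assignees, N4, eq_comm]

theorem card_assignees_N4_inr : #(assignees (N4 u) (.inr ())) = u := by
  have : assignees (N4 u) (.inr ()) = univ.map .inr := by
    ext r; simp only [assignees, mem_filter]; cases r <;> simp [N4]
  simp [this]

theorem assignees_M4_inl (j : Fin u) : assignees (M4 u) (.inl j) = ∅ := by
  ext r; simp only [assignees, mem_filter]; cases r <;> simp [M4]

theorem card_assignees_M4_inr : #(assignees (M4 u) (.inr ())) = u := by
  have : assignees (M4 u) (.inr ()) = univ.map .inl := by
    ext r; simp only [assignees, mem_filter]; cases r <;> simp [M4]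
  simp [this]

theorem I4_not_blocks_of_card_assignees_inr {l : ℕ} {M : (Fin u ⊕ Fin u) → Option (Fin u ⊕ Unit)}
    (hM : #(assignees M (.inr ())) = u) (r : Fin u ⊕ Fin u) : ¬ (I4 l u).Blocks M r (.inr ()) :=
  (I4 l u).not_blocks_of_full hM.ge fun _ _ => le_rfl

theorem isStable_N4 (l : ℕ) (hu : 1 ≤ u) : (I4 l u).IsStable (N4 u) := by
  refine ⟨⟨?_, ?_⟩, ?_⟩
  · rintro (i | i) (j | j) h <;> simp_all [N4, I4]
  · rintro (j | _)
    · simpa [assignees_N4_inl, I4] using hu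
    · exact (card_assignees_N4_inr u).le
  · rintro (i | i) (j | _)
    · exact (I4 l u).not_blocks_of_rRank_le (h' := .inl i) rfl le_rfl
    · exact I4_not_blocks_of_card_assignees_inr u (card_assignees_N4_inr u) _
    · exact (I4 l u).not_blocks_of_not_acc id
    · exact I4_not_blocks_of_card_assignees_inr u (card_assignees_N4_inr u) _

theorem isStable_M4 (l : ℕ) : (I4 l u).IsStable (M4 u) := by
  refine ⟨⟨?_, ?_⟩, ?_⟩
  · rintro (i | i) (j | j) h <;> simp_all [M4, I4]
  · rintro (j | _)
    · simp [assignees_M4_inl]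
    · exact (card_assignees_M4_inr u).le
  · rintro (i | i) (j | _)
    · exact (I4 l u).not_blocks_of_rRank_le (h' := .inr ()) rfl (Nat.zero_le _)
    · exact I4_not_blocks_of_card_assignees_inr u (card_assignees_M4_inr u) _
    · exact (I4 l u).not_blocks_of_not_acc id
    · exact I4_not_blocks_of_card_assignees_inr u (card_assignees_M4_inr u) _

variable {l : ℕ}

theorem score_I4 (hl : 0 < l) (M : (Fin u ⊕ Fin u) → Option (Fin u ⊕ Unit)) :
    (I4 l u).score M = ∑ j, min 1 ((#(assignees M (.inl j)) : ℚ) / l)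
      + min 1 ((#(assignees M (.inr ())) : ℚ) / l) := by
  rw [(I4 l u).score_eq_sum_min_of_lq_eq hl.ne' (fun _ => rfl), Fintype.sum_sum_type,
    Fintype.univ_unit, sum_singleton]

variable (hl : 0 < l) (hlu : l ≤ u)
include hl hlu

theorem score_N4 : (I4 l u).score (N4 u) = (u : ℚ) / l + 1 := by
  simp [score_I4 u hl, assignees_N4_inl, card_assignees_N4_inr, min_one_natCast_div_eq_one hl hlu,
    min_one_inv_natCast hl]
  ring

theorem score_M4 : (I4 l u).score (M4 u) = 1 := by
  simp [score_I4 u hl, assignees_M4_inl, card_assignees_M4_inr, min_one_natCast_div_eq_one hl hlu]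

end UniformInstance

/-- In the uniform model there are two stable matchings with scores `θ + 1 = u/ℓ + 1`
and `1`, even with strict residents' preference lists. -/
theorem stmt_4 (l u : ℕ) (hl : 1 ≤ l) (hlu : l ≤ u) :
    (I4 l u).IsStable (N4 u) ∧ (I4 l u).IsStable (M4 u) ∧
    (I4 l u).score (N4 u) = (u : ℚ) / (l : ℚ) + 1 ∧
    (I4 l u).score (M4 u) = 1 :=
  ⟨isStable_N4 u l (hl.trans hlu), isStable_M4 u l, score_N4 u hl hlu, score_M4 u hl hlu⟩
end

section
/- Let I be an HRT-MSLQ instance with n residents in which residents' preference lists are strict, and define H0 = {h : ℓ(h) = 0} and H_f = {h : h is first choice of at least u(h) residents}. Then for every stable matching M: s(M) ≥ |H0 ∪ H_f|, and the optimal stable score satisfies OPT(I) ≤ n + |H0 \ H_f|. -/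
/-- With strict residents' lists, `H0 = {h : ℓ(h)=0}` and `H_f` the hospitals that are the
first choice of at least `u(h)` residents: every stable matching `M` satisfies
`s(M) ≥ |H0 ∪ H_f|`, and `s(M) ≤ n + |H0 \ H_f|` (hence `OPT(I) ≤ n + |H0 \ H_f|`). -/
theorem stmt_8 {R H : Type} [Fintype R] [DecidableEq R] [Fintype H] [DecidableEq H]
    (I : HRTInstance R H)
    (hstrict : ∀ r h h', I.acc r h → I.acc r h' → I.rRank r h = I.rRank r h' → h = h')
    (hlu : ∀ h, I.lq h ≤ I.uq h) (huq : ∀ h, 1 ≤ I.uq h)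
    (H0 : Set H) (hH0 : H0 = {h | I.lq h = 0})
    (Hf : Set H)
    (hHf : Hf = {h | I.uq h ≤
      {r : R | I.acc r h ∧ ∀ h', I.acc r h' → I.rRank r h ≤ I.rRank r h'}.ncard})
    (M : R → Option H) (hM : I.IsStable M) :
    (((H0 ∪ Hf).ncard : ℚ) ≤ I.score M) ∧
    I.score M ≤ (Fintype.card R : ℚ) + ((H0 \ Hf).ncard : ℚ) := by
  classical
  obtain ⟨⟨hacc, hcap⟩, hstab⟩ := hM
  -- hospitals in Hf are full
  have hfull : ∀ h ∈ Hf, (HRTInstance.assignees M h).card = I.uq h := by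
    intro h hh
    rw [hHf] at hh
    simp only [Set.mem_setOf_eq] at hh
    by_contra hne
    have hlt : (HRTInstance.assignees M h).card < I.uq h := lt_of_le_of_ne (hcap h) hne
    have hlt2 : ((HRTInstance.assignees M h : Finset R) : Set R).ncard <
        {r : R | I.acc r h ∧ ∀ h', I.acc r h' → I.rRank r h ≤ I.rRank r h'}.ncard := by
      rw [Set.ncard_coe_finset]; omega
    obtain ⟨r, hrS, hrn⟩ := Set.exists_mem_notMem_of_ncard_lt_ncard hlt2 (Set.toFinite _)
    obtain ⟨hracc, hrfirst⟩ := hrS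
    have hrn' : M r ≠ some h := by
      simpa [HRTInstance.assignees] using hrn
    apply hstab r h
    refine ⟨hracc, ?_, Or.inl hlt⟩
    cases hMr : M r with
    | none => exact Or.inl rfl
    | some h' =>
      refine Or.inr ⟨h', rfl, ?_⟩
      have hacc' : I.acc r h' := hacc r h' hMr
      have hle : I.rRank r h ≤ I.rRank r h' := hrfirst h' hacc'
      rcases lt_or_eq_of_le hle with hlt' | heq
      · exact hlt'
      · exact absurd (hMr.trans (congrArg some (hstrict r h h' hracc hacc' heq).symm)) hrn'
  have hfne : ∀ h ∈ Hf, (HRTInstance.assignees M h).Nonempty := by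
    intro h hh
    rw [← Finset.card_pos, hfull h hh]
    exact huq h
  -- each summand is between 0 and 1, and equals 1 on H0 ∪ Hf
  set t : H → ℚ := fun h => if I.lq h = 0 then 1
      else min 1 (((HRTInstance.assignees M h).card : ℚ) / (I.lq h : ℚ)) with ht
  have ht0 : ∀ h, 0 ≤ t h := by
    intro h; simp only [ht]
    split
    · norm_num
    · refine le_min (by norm_num) (div_nonneg (by positivity) (by positivity))
  have ht1 : ∀ h, t h ≤ 1 := by
    intro h; simp only [ht]; split
    · exact le_rfl
    · exact min_le_left _ _
  have htone : ∀ h, h ∈ H0 ∪ Hf → t h = 1 := by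
    intro h hh
    simp only [ht]
    rcases hh with hh | hh
    · rw [hH0] at hh
      have hz : I.lq h = 0 := hh
      simp [hz]
    · split
      · rfl
      · rename_i hl0
        have hl1 : 1 ≤ I.lq h := Nat.one_le_iff_ne_zero.mpr hl0
        have : (I.lq h : ℚ) ≤ ((HRTInstance.assignees M h).card : ℚ) := by
          exact_mod_cast (hlu h).trans_eq (hfull h hh).symm
        have hlq : (0:ℚ) < (I.lq h : ℚ) := by exact_mod_cast hl1
        exact min_eq_left ((one_le_div hlq).mpr this)
  constructor
  · -- lower bound
    rw [Set.ncard_eq_toFinset_card' (H0 ∪ Hf)]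
    have : ((H0 ∪ Hf).toFinset.card : ℚ) = ∑ h ∈ (H0 ∪ Hf).toFinset, t h := by
      rw [Finset.sum_congr rfl (fun h hh => htone h (Set.mem_toFinset.mp hh))]
      simp
    rw [this]
    unfold HRTInstance.score
    exact Finset.sum_le_sum_of_subset_of_nonneg (Finset.subset_univ _)
      (fun h _ _ => ht0 h)
  · -- upper bound
    unfold HRTInstance.score
    have hsplit := Finset.sum_filter_add_sum_filter_not Finset.univ
      (fun h => (HRTInstance.assignees M h).Nonempty) t
    have heq : ∑ h, t h = (∑ h ∈ Finset.univ.filter (fun h => (HRTInstance.assignees M h).Nonempty), t h)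
        + ∑ h ∈ Finset.univ.filter (fun h => ¬ (HRTInstance.assignees M h).Nonempty), t h := hsplit.symm
    show (∑ h, t h) ≤ _
    rw [heq]
    have hN : (∑ h ∈ Finset.univ.filter (fun h => (HRTInstance.assignees M h).Nonempty), t h)
        ≤ (Fintype.card R : ℚ) := by
      calc (∑ h ∈ Finset.univ.filter (fun h => (HRTInstance.assignees M h).Nonempty), t h)
          ≤ ∑ _h ∈ Finset.univ.filter (fun h => (HRTInstance.assignees M h).Nonempty), (1:ℚ) :=
            Finset.sum_le_sum (fun h _ => ht1 h)
        _ = ((Finset.univ.filter (fun h => (HRTInstance.assignees M h).Nonempty)).card : ℚ) := by simp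
        _ ≤ (Fintype.card R : ℚ) := by
            have : (Finset.univ.filter (fun h => (HRTInstance.assignees M h).Nonempty)).card
                ≤ Fintype.card R := by
              have hcard : (Finset.univ.filter (fun h => (HRTInstance.assignees M h).Nonempty)).card
                  = Fintype.card {h : H // (HRTInstance.assignees M h).Nonempty} := by
                rw [Fintype.card_subtype]
              rw [hcard]
              apply Fintype.card_le_of_injective (fun h => h.2.choose)
              intro h1 h2 hfe
              have e1 : M h1.2.choose = some h1.1 := by
                simpa [HRTInstance.assignees] using h1.2.choose_spec
              have e2 : M h2.2.choose = some h2.1 := by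
                simpa [HRTInstance.assignees] using h2.2.choose_spec
              have hfe' : h1.2.choose = h2.2.choose := hfe
              rw [hfe'] at e1
              exact Subtype.ext (Option.some.inj (e1.symm.trans e2))
            exact_mod_cast this
    have hE : (∑ h ∈ Finset.univ.filter (fun h => ¬ (HRTInstance.assignees M h).Nonempty), t h)
        ≤ ((H0 \ Hf).ncard : ℚ) := by
      have hE0 : ∀ h ∈ Finset.univ.filter (fun h => ¬ (HRTInstance.assignees M h).Nonempty),
          t h = if I.lq h = 0 then (1:ℚ) else 0 := by
        intro h hh
        simp only [Finset.mem_filter, Finset.mem_univ, true_and,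
          Finset.not_nonempty_iff_eq_empty] at hh
        simp only [ht, hh]
        split
        · rfl
        · norm_num
      rw [Finset.sum_congr rfl hE0, Finset.sum_boole]
      have hsub : (Finset.univ.filter (fun h => ¬ (HRTInstance.assignees M h).Nonempty)).filter
          (fun h => I.lq h = 0) ⊆ (H0 \ Hf).toFinset := by
        intro h hh
        simp only [Finset.mem_filter, Finset.mem_univ, true_and] at hh
        rw [Set.mem_toFinset, Set.mem_diff, hH0]
        exact ⟨hh.2, fun hf => hh.1 (hfne h hf)⟩
      rw [Set.ncard_eq_toFinset_card' (H0 \ Hf)]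
      exact_mod_cast Finset.card_le_card hsub
    linarith
end

section
/- Let p, q : R ∪ R' → ℝ≥0 with |R| = |R'| = n, viewed as vertex weights on the two sides of a bipartite graph G = (R, R'; F) where F = {(r, r') : p(r) ≥ q(r')}. Suppose R partitions into R_+, R_−, R_0 with injections ξ_+ : R_+ → R' satisfying p(r) = q(ξ_+(r)), ξ_− : R'_− → R satisfying q(r') = p(ξ_−(r')) (where R'_− is the copy of R_− in R'), and each r in R_0 is joined to its own copy r' with p(r) ≥ q(r'). Then the multigraph on R ∪ R' formed by the edge sets {(r, ξ_+(r)) : r ∈ R_+}, {(ξ_−(r'), r') : r' ∈ R'_−}, and {(r, r') : r ∈ R_0} has maximum degree at most 2, and hence contains a matching of size at least ⌈n/2⌉, which is also a matching in G. -/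
section Aux
variable {R : Type} [DecidableEq R]

open Classical in
noncomputable def clashM (A : Finset R) (ξ : R → R) : R → Option R :=
  fun x =>
    if x ∈ A then (if ξ x ∉ A then some (ξ x) else none)
    else if h : ∃ a, a ∈ A ∧ ξ a = x then some h.choose else none

lemma clashM_spec {A : Finset R} {ξ : R → R} {v w : R} (h : clashM A ξ v = some w) :
    (v ∈ A ∧ ξ v ∉ A ∧ w = ξ v) ∨ (v ∉ A ∧ w ∈ A ∧ ξ w = v) := by
  unfold clashM at h
  by_cases hv : v ∈ A
  · rw [if_pos hv] at h
    by_cases hξ : ξ v ∉ A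
    · rw [if_pos hξ] at h
      exact Or.inl ⟨hv, hξ, (Option.some_injective _ h).symm⟩
    · rw [if_neg hξ] at h; exact absurd h (by simp)
  · rw [if_neg hv] at h
    by_cases he : ∃ a, a ∈ A ∧ ξ a = v
    · rw [dif_pos he] at h
      obtain ⟨ha, hb⟩ := he.choose_spec
      cases Option.some_injective _ h
      exact Or.inr ⟨hv, ha, hb⟩
    · rw [dif_neg he] at h; exact absurd h (by simp)

lemma clashM_of_mem {A : Finset R} {ξ : R → R} {v : R} (hv : v ∈ A) (hξ : ξ v ∉ A) :
    clashM A ξ v = some (ξ v) := by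
  unfold clashM; rw [if_pos hv, if_pos hξ]

lemma clashM_of_preim {A : Finset R} {ξ : R → R} (hinj : Set.InjOn ξ ↑A) {v w : R}
    (hv : v ∉ A) (hw : w ∈ A) (hξ : ξ w = v) : clashM A ξ v = some w := by
  have he : ∃ a, a ∈ A ∧ ξ a = v := ⟨w, hw, hξ⟩
  unfold clashM
  rw [if_neg hv, dif_pos he]
  obtain ⟨ha, hb⟩ := he.choose_spec
  exact congrArg some (hinj ha hw (hb.trans hξ.symm))

lemma clashM_sym {A : Finset R} {ξ : R → R} (hinj : Set.InjOn ξ ↑A) {v w : R}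
    (h : clashM A ξ v = some w) : w ≠ v ∧ clashM A ξ w = some v := by
  rcases clashM_spec h with ⟨hv, hξ, rfl⟩ | ⟨hv, hw, hξ⟩
  · exact ⟨fun e => hξ (by rwa [e]), clashM_of_preim hinj hξ hv rfl⟩
  · refine ⟨fun e => hv (e ▸ hw), ?_⟩
    have : ξ w ∉ A := hξ ▸ hv
    rw [clashM_of_mem hw this, hξ]

/-- Symmetric partial matching on `V`. -/
def MSym (V : Finset R) (m : R → Option R) : Prop :=
  ∀ v ∈ V, ∀ w, m v = some w → w ∈ V ∧ w ≠ v ∧ m w = some v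

/-- restriction of a partial matching to `V`. -/
def mrestr (V : Finset R) (m : R → Option R) : R → Option R :=
  fun x => (m x).bind (fun w => if x ∈ V ∧ w ∈ V then some w else none)

lemma mrestr_eq_some {V : Finset R} {m : R → Option R} {x w : R} :
    mrestr V m x = some w ↔ m x = some w ∧ x ∈ V ∧ w ∈ V := by
  cases h : m x with
  | none => simp [mrestr, h]
  | some u =>
    simp only [mrestr, h, Option.bind_some]
    constructor
    · intro hif
      split_ifs at hif with hc
      have he := Option.some_inj.mp hif; subst he; exact ⟨rfl, hc⟩
    · rintro ⟨h1, h2⟩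
      have he := Option.some_inj.mp h1; subst he
      exact if_pos h2

lemma mrestr_sym {V V' : Finset R} {m : R → Option R} (hV : V' ⊆ V) (h : MSym V m) :
    MSym V' (mrestr V' m) := by
  intro v hv w hw
  rw [mrestr_eq_some] at hw
  obtain ⟨h1, h2, h3⟩ := hw
  obtain ⟨_, hne, hsym⟩ := h v (hV h2) w h1
  exact ⟨h3, hne, mrestr_eq_some.mpr ⟨hsym, h3, h2⟩⟩

/-- a fixed-point-free involution (total symmetric matching) on `V` forces `V.card` even. -/
lemma even_card_of_total (V : Finset R) :
    ∀ m : R → Option R, MSym V m → (∀ v ∈ V, m v ≠ none) → Even V.card := by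
  induction V using Finset.strongInductionOn with
  | _ V ih =>
    intro m hs ht
    rcases V.eq_empty_or_nonempty with rfl | ⟨v, hv⟩
    · simp
    · obtain ⟨u, hu⟩ : ∃ u, m v = some u := Option.ne_none_iff_exists'.mp (ht v hv)
      obtain ⟨huV, hune, hsym⟩ := hs v hv u hu
      set V' := V \ {v, u} with hV'
      have hsub : ({v, u} : Finset R) ⊆ V := by
        intro x hx; simp at hx; rcases hx with rfl | rfl <;> assumption
      have hss : V' ⊂ V :=
        Finset.ssubset_iff_of_subset Finset.sdiff_subset |>.mpr ⟨v, hv, by simp [hV']⟩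
      have hpair : ({v, u} : Finset R).card = 2 := Finset.card_pair (Ne.symm hune)
      have hcard : V'.card = V.card - 2 := by
        rw [hV', Finset.card_sdiff_of_subset hsub, hpair]
      have hVsub : V' ⊆ V := Finset.sdiff_subset
      have hsym' : MSym V' (mrestr V' m) := mrestr_sym hVsub hs
      have htot' : ∀ x ∈ V', mrestr V' m x ≠ none := by
        intro x hx
        obtain ⟨y, hy⟩ : ∃ y, m x = some y := Option.ne_none_iff_exists'.mp (ht x (hVsub hx))
        obtain ⟨hyV, hyne, hysym⟩ := hs x (hVsub hx) y hy
        have hxvu : x ≠ v ∧ x ≠ u := by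
          constructor <;> (intro e; subst e; simp [hV'] at hx)
        have hyV' : y ∈ V' := by
          simp only [hV', Finset.mem_sdiff, Finset.mem_insert, Finset.mem_singleton]
          refine ⟨hyV, ?_⟩
          rintro (rfl | rfl)
          · rw [hu] at hysym; cases hysym; exact hxvu.2 rfl
          · rw [hysym] at hsym; cases hsym; exact hxvu.1 rfl
        rw [Ne, Option.eq_none_iff_forall_not_mem]
        push_neg
        exact ⟨y, mrestr_eq_some.mpr ⟨hy, hx, hyV'⟩⟩
      have heven := ih V' hss (mrestr V' m) hsym' htot'
      have h2 : 2 ≤ V.card := hpair ▸ Finset.card_le_card hsub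
      rw [Nat.even_iff] at heven ⊢
      omega

end Aux

section Key
variable {R : Type} [DecidableEq R]

/-- One step of the induction: delete `v` together with its neighbourhood `D`. -/
lemma indep_step (V : Finset R) (m1 m2 : R → Option R)
    (hs1 : MSym V m1) (hs2 : MSym V m2) (v : R) (hv : v ∈ V) (D : Finset R) (hvD : v ∈ D)
    (hnb1 : ∀ w, m1 v = some w → w ∈ D) (hnb2 : ∀ w, m2 v = some w → w ∈ D)
    (hpr : ∃ S' ⊆ V \ D, ((V \ D).card + 1) / 2 ≤ S'.card ∧
      ∀ x ∈ S', ∀ y ∈ S', mrestr (V \ D) m1 x ≠ some y ∧ mrestr (V \ D) m2 x ≠ some y)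
    (hcard : (V.card + 1) / 2 ≤ ((V \ D).card + 1) / 2 + 1) :
    ∃ S ⊆ V, (V.card + 1) / 2 ≤ S.card ∧
      ∀ x ∈ S, ∀ y ∈ S, m1 x ≠ some y ∧ m2 x ≠ some y := by
  obtain ⟨S', hS'sub, hS'card, hS'ind⟩ := hpr
  have hvS' : v ∉ S' := fun h => (Finset.mem_sdiff.mp (hS'sub h)).2 hvD
  refine ⟨insert v S', ?_, ?_, ?_⟩
  · intro x hx
    rcases Finset.mem_insert.mp hx with rfl | hx
    · exact hv
    · exact (Finset.mem_sdiff.mp (hS'sub hx)).1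
  · rw [Finset.card_insert_of_notMem hvS']
    omega
  · have key : ∀ m : R → Option R, MSym V m → (∀ w, m v = some w → w ∈ D) →
        (∀ x ∈ S', ∀ y ∈ S', mrestr (V \ D) m x ≠ some y) →
        ∀ x ∈ insert v S', ∀ y ∈ insert v S', m x ≠ some y := by
      intro m hs hnb hind x hx y hy hxy
      rcases Finset.mem_insert.mp hx with rfl | hx
      · rcases Finset.mem_insert.mp hy with rfl | hy
        · exact (hs _ hv _ hxy).2.1 rfl
        · exact (Finset.mem_sdiff.mp (hS'sub hy)).2 (hnb y hxy)
      · have hxV' := hS'sub hx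
        have hxV := (Finset.mem_sdiff.mp hxV').1
        rcases Finset.mem_insert.mp hy with rfl | hy
        · have := (hs _ hxV _ hxy).2.2
          exact (Finset.mem_sdiff.mp hxV').2 (hnb x this)
        · exact hind x hx y hy (mrestr_eq_some.mpr ⟨hxy, hxV', hS'sub hy⟩)
    intro x hx y hy
    exact ⟨key m1 hs1 hnb1 (fun a ha b hb => (hS'ind a ha b hb).1) x hx y hy,
           key m2 hs2 hnb2 (fun a ha b hb => (hS'ind a ha b hb).2) x hx y hy⟩

/-- Any two symmetric partial matchings on `V` admit a common independent set of
size at least `⌈|V|/2⌉`. -/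
lemma indep_lemma (V : Finset R) :
    ∀ m1 m2 : R → Option R, MSym V m1 → MSym V m2 →
    ∃ S ⊆ V, (V.card + 1) / 2 ≤ S.card ∧
      ∀ x ∈ S, ∀ y ∈ S, m1 x ≠ some y ∧ m2 x ≠ some y := by
  induction V using Finset.strongInductionOn with
  | _ V ih =>
    intro m1 m2 hs1 hs2
    rcases V.eq_empty_or_nonempty with rfl | hne
    · exact ⟨∅, by simp⟩
    by_cases hA : ∃ v ∈ V, m1 v = none ∨ m2 v = none ∨ m1 v = m2 v
    · -- low degree case
      obtain ⟨v, hv, hdeg⟩ := hA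
      set D : Finset R := insert v ((m1 v).toFinset ∪ (m2 v).toFinset) with hD
      have hvD : v ∈ D := Finset.mem_insert_self _ _
      have hDcard : D.card ≤ 2 := by
        have h1 : ((m1 v).toFinset ∪ (m2 v).toFinset).card ≤ 1 := by
          rcases hdeg with h | h | h
          · rw [h]; simp only [Option.toFinset_none, Finset.empty_union]
            cases m2 v <;> simp
          · rw [h]; simp only [Option.toFinset_none, Finset.union_empty]
            cases m1 v <;> simp
          · rw [h, Finset.union_self]
            cases m2 v <;> simp
        calc D.card ≤ ((m1 v).toFinset ∪ (m2 v).toFinset).card + 1 :=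
              Finset.card_insert_le _ _
        _ ≤ 2 := by omega
      have hss : V \ D ⊂ V :=
        Finset.ssubset_iff_of_subset Finset.sdiff_subset |>.mpr
          ⟨v, hv, fun h => (Finset.mem_sdiff.mp h).2 hvD⟩
      have hVD : V.card - 2 ≤ (V \ D).card := by
        have := Finset.le_card_sdiff D V
        omega
      refine indep_step V m1 m2 hs1 hs2 v hv D hvD ?_ ?_
        (ih _ hss _ _ (mrestr_sym Finset.sdiff_subset hs1) (mrestr_sym Finset.sdiff_subset hs2))
        ?_
      · intro w hw
        simp [hD, hw]
      · intro w hw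
        simp [hD, hw]
      · have h1 : 1 ≤ V.card := Finset.card_pos.mpr hne
        omega
    · -- all degrees exactly two
      push_neg at hA
      have htot1 : ∀ v ∈ V, m1 v ≠ none := fun v hv => (hA v hv).1
      have heven := even_card_of_total V m1 hs1 htot1
      obtain ⟨v, hv⟩ := hne
      obtain ⟨u, hu⟩ : ∃ u, m1 v = some u := Option.ne_none_iff_exists'.mp (hA v hv).1
      obtain ⟨w, hw⟩ : ∃ w, m2 v = some w := Option.ne_none_iff_exists'.mp (hA v hv).2.1
      have huw : u ≠ w := fun h => (hA v hv).2.2 (by rw [hu, hw, h])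
      obtain ⟨huV, hune, -⟩ := hs1 v hv u hu
      obtain ⟨hwV, hwne, -⟩ := hs2 v hv w hw
      set D : Finset R := {v, u, w} with hD
      have hvD : v ∈ D := by simp [hD]
      have hDsub : D ⊆ V := by
        intro x hx
        simp [hD] at hx
        rcases hx with rfl | rfl | rfl <;> assumption
      have hDcard : D.card = 3 := by
        rw [hD]
        rw [Finset.card_insert_of_notMem (by simp [Ne.symm hune, Ne.symm hwne]),
          Finset.card_pair huw]
      have hss : V \ D ⊂ V :=
        Finset.ssubset_iff_of_subset Finset.sdiff_subset |>.mpr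
          ⟨v, hv, fun h => (Finset.mem_sdiff.mp h).2 hvD⟩
      have hVD : (V \ D).card = V.card - 3 := by
        rw [Finset.card_sdiff_of_subset hDsub, hDcard]
      refine indep_step V m1 m2 hs1 hs2 v hv D hvD ?_ ?_
        (ih _ hss _ _ (mrestr_sym Finset.sdiff_subset hs1) (mrestr_sym Finset.sdiff_subset hs2))
        ?_
      · intro x hx
        rw [hu] at hx
        cases Option.some_inj.mp hx
        simp [hD]
      · intro x hx
        rw [hw] at hx
        cases Option.some_inj.mp hx
        simp [hD]
      · have h3 : 3 ≤ V.card := hDcard ▸ Finset.card_le_card hDsub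
        rw [Nat.even_iff] at heven
        omega

end Key

lemma inj_helper {R : Type} [DecidableEq R] (A : Finset R) (ξ : R → R)
    (hA : Set.InjOn ξ ↑A) (S : Finset R)
    (hind : ∀ x ∈ S, ∀ y ∈ S, clashM A ξ x ≠ some y) :
    ∀ x ∈ S, ∀ y ∈ S, (if x ∈ A then ξ x else x) = (if y ∈ A then ξ y else y) → x = y := by
  intro x hx y hy h
  by_cases hxA : x ∈ A <;> by_cases hyA : y ∈ A
  · rw [if_pos hxA, if_pos hyA] at h
    exact hA hxA hyA h
  · rw [if_pos hxA, if_neg hyA] at h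
    exact absurd (h ▸ clashM_of_mem hxA (h ▸ hyA)) (hind x hx y hy)
  · rw [if_neg hxA, if_pos hyA] at h
    exact absurd (h ▸ clashM_of_mem hyA (h ▸ hxA)) (hind y hy x hx)
  · rwa [if_neg hxA, if_neg hyA] at h


/-- Combinatorial core of the `more-than-half` lemma: given vertex weights `p` (on `R`)
and `q` (on the copy `R'` of `R`, identified with `R`), a partition of `R` into
`R_+`, `R_−`, `R_0`, an injection `ξ_+` on `R_+` with `p r = q (ξ_+ r)`, an injection
`ξ_−` on (the copy of) `R_−` with `q r' = p (ξ_− r')`, and `p r ≥ q r` on `R_0`, the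
multigraph formed by the three corresponding edge sets contains a matching of size at
least `⌈n/2⌉` all of whose edges `(a, b)` satisfy `p a ≥ q b`, i.e. lie in
`G = (R, R'; F)` where `F = {(a,b) : p a ≥ q b}`. -/
theorem stmt_11 {R : Type} [Fintype R] [DecidableEq R]
    (p q : R → ℚ) (hp : ∀ r, 0 ≤ p r) (hq : ∀ r, 0 ≤ q r)
    (Rp Rm R0 : Finset R)
    (hd1 : Disjoint Rp Rm) (hd2 : Disjoint Rp R0) (hd3 : Disjoint Rm R0)
    (hcover : Rp ∪ Rm ∪ R0 = Finset.univ)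
    (ξp ξm : R → R)
    (hξpinj : Set.InjOn ξp ↑Rp) (hξpeq : ∀ r ∈ Rp, p r = q (ξp r))
    (hξminj : Set.InjOn ξm ↑Rm) (hξmeq : ∀ r ∈ Rm, p (ξm r) = q r)
    (hR0 : ∀ r ∈ R0, q r ≤ p r) :
    ∃ X : Finset (R × R),
      (∀ e ∈ X,
        (e.1 ∈ Rp ∧ e.2 = ξp e.1) ∨ (e.2 ∈ Rm ∧ e.1 = ξm e.2) ∨ (e.1 ∈ R0 ∧ e.2 = e.1)) ∧
      (∀ e ∈ X, ∀ e' ∈ X, e.1 = e'.1 → e = e') ∧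
      (∀ e ∈ X, ∀ e' ∈ X, e.2 = e'.2 → e = e') ∧
      (∀ e ∈ X, q e.2 ≤ p e.1) ∧
      (Fintype.card R + 1) / 2 ≤ X.card := by
  classical
  have hs1 : MSym Finset.univ (clashM Rm ξm) := by
    intro v _ w h
    obtain ⟨hne, hsym⟩ := clashM_sym hξminj h
    exact ⟨Finset.mem_univ _, hne, hsym⟩
  have hs2 : MSym Finset.univ (clashM Rp ξp) := by
    intro v _ w h
    obtain ⟨hne, hsym⟩ := clashM_sym hξpinj h
    exact ⟨Finset.mem_univ _, hne, hsym⟩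
  obtain ⟨S, -, hScard, hSind⟩ := indep_lemma Finset.univ (clashM Rm ξm) (clashM Rp ξp) hs1 hs2
  have hfst := inj_helper Rm ξm hξminj S (fun x hx y hy => (hSind x hx y hy).1)
  have hsnd := inj_helper Rp ξp hξpinj S (fun x hx y hy => (hSind x hx y hy).2)
  set fs : R → R × R :=
    fun r => (if r ∈ Rm then ξm r else r, if r ∈ Rp then ξp r else r) with hfs
  have hmem : ∀ r : R, r ∈ Rp ∨ r ∈ Rm ∨ r ∈ R0 := by
    intro r
    have := Finset.mem_univ r
    rw [← hcover] at this
    simpa [Finset.mem_union, or_assoc] using this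
  refine ⟨S.image fs, ?_, ?_, ?_, ?_, ?_⟩
  · rintro e he
    obtain ⟨r, hrS, rfl⟩ := Finset.mem_image.mp he
    rcases hmem r with hr | hr | hr
    · have hrm : r ∉ Rm := Finset.disjoint_left.mp hd1 hr
      exact Or.inl (by simp [hfs, if_neg hrm, if_pos hr, hr])
    · have hrp : r ∉ Rp := Finset.disjoint_right.mp hd1 hr
      exact Or.inr (Or.inl (by simp [hfs, if_pos hr, if_neg hrp, hr]))
    · have hrp : r ∉ Rp := Finset.disjoint_right.mp hd2 hr
      have hrm : r ∉ Rm := Finset.disjoint_right.mp hd3 hr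
      exact Or.inr (Or.inr (by simp [hfs, if_neg hrp, if_neg hrm, hr]))
  · rintro e he e' he' h
    obtain ⟨r, hrS, rfl⟩ := Finset.mem_image.mp he
    obtain ⟨r', hrS', rfl⟩ := Finset.mem_image.mp he'
    rw [hfst r hrS r' hrS' h]
  · rintro e he e' he' h
    obtain ⟨r, hrS, rfl⟩ := Finset.mem_image.mp he
    obtain ⟨r', hrS', rfl⟩ := Finset.mem_image.mp he'
    rw [hsnd r hrS r' hrS' h]
  · rintro e he
    obtain ⟨r, hrS, rfl⟩ := Finset.mem_image.mp he
    rcases hmem r with hr | hr | hr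
    · have hrm : r ∉ Rm := Finset.disjoint_left.mp hd1 hr
      simpa [hfs, if_neg hrm, if_pos hr] using (hξpeq r hr).ge
    · have hrp : r ∉ Rp := Finset.disjoint_right.mp hd1 hr
      simpa [hfs, if_pos hr, if_neg hrp] using (hξmeq r hr).ge
    · have hrp : r ∉ Rp := Finset.disjoint_right.mp hd2 hr
      have hrm : r ∉ Rm := Finset.disjoint_right.mp hd3 hr
      simpa [hfs, if_neg hrp, if_neg hrm] using hR0 r hr
  · rw [Finset.card_image_of_injOn
      (fun x hx y hy h => hsnd x hx y hy (congrArg Prod.snd h))]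
    rw [← Finset.card_univ]
    exact hScard
end

section
/- Consider the HRT-MSLQ instance with n residents r_1,…,r_n and n+1 hospitals h_1,…,h_{n+1}, where every resident's preference list is a single tie containing all hospitals, each hospital's list is a complete strict list of all residents, quotas are [1,1] for h_1,…,h_n and [0,n] for h_{n+1}. Then N = {(r_i,h_i) : 1 ≤ i ≤ n} and M = {(r_i,h_{n+1}) : 1 ≤ i ≤ n} are both stable, s(N) = n+1, and s(M) = 1; hence the maximum gap of the general model (and of the resident-side master-list model) is at least n+1. -/
/-- `n` residents whose preference list is a single tie over all `n + 1` hospitals;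
each hospital ranks all residents strictly (by index); quotas `[1,1]` for
`h_1, …, h_n` and `[0,n]` for `h_{n+1}`. -/
def I18 (n : ℕ) : HRTInstance (Fin n) (Fin (n + 1)) where
  acc _ _ := True
  rRank _ _ := 0
  hRank _ r := r.val
  lq h := if h.val = n then 0 else 1
  uq h := if h.val = n then n else 1

lemma assigneesN (n : ℕ) (h : Fin (n+1)) :
    HRTInstance.assignees (fun r : Fin n => some r.castSucc) h
      = Finset.univ.filter (fun r : Fin n => r.val = h.val) := by
  unfold HRTInstance.assignees
  apply Finset.filter_congr
  intro r _
  simp [Fin.ext_iff, Fin.castSucc]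

lemma cardN_lt (n : ℕ) (h : Fin (n+1)) (hh : h.val ≠ n) :
    (HRTInstance.assignees (fun r : Fin n => some r.castSucc) h).card = 1 := by
  rw [assigneesN]
  have hlt : h.val < n := lt_of_le_of_ne (Nat.lt_succ_iff.mp h.isLt) hh
  rw [Finset.card_eq_one]
  exact ⟨⟨h.val, hlt⟩, by ext r; simp [Fin.ext_iff, eq_comm]⟩

lemma cardN_last (n : ℕ) (h : Fin (n+1)) (hh : h.val = n) :
    (HRTInstance.assignees (fun r : Fin n => some r.castSucc) h).card = 0 := by
  rw [assigneesN, Finset.card_eq_zero, Finset.filter_eq_empty_iff]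
  intro r _
  omega

lemma cardM (n : ℕ) (h : Fin (n+1)) :
    (HRTInstance.assignees (fun _ : Fin n => some (Fin.last n)) h).card
      = if h.val = n then n else 0 := by
  unfold HRTInstance.assignees
  split
  · next hv =>
    have : h = Fin.last n := Fin.ext hv
    subst this
    simp
  · next hv =>
    rw [Finset.card_eq_zero, Finset.filter_eq_empty_iff]
    intro r _
    simp [Fin.ext_iff, Fin.last]
    omega

/-- `N = {(r_i,h_i)}` and `M = {(r_i,h_{n+1})}` are both stable, `s(N) = n + 1`
and `s(M) = 1`; hence the maximum gap of the general model (and of the resident-side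
master-list model) is at least `n + 1`. -/
theorem stmt_18 (n : ℕ) :
    (I18 n).IsStable (fun r => some r.castSucc) ∧
    (I18 n).IsStable (fun _ => some (Fin.last n)) ∧
    (I18 n).score (fun r => some r.castSucc) = (n : ℚ) + 1 ∧
    (I18 n).score (fun _ => some (Fin.last n)) = 1 := by
  have noblockN : ∀ (M : Fin n → Option (Fin (n+1))), (∀ r, M r ≠ none) →
      ∀ r h, ¬ (I18 n).Blocks M r h := by
    intro M hM r h hb
    rcases hb.2.1 with h1 | ⟨h', _, hlt⟩
    · exact hM r h1
    · simp [I18] at hlt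
  refine ⟨⟨⟨fun _ _ _ => trivial, ?_⟩, noblockN _ (by simp)⟩,
          ⟨⟨fun _ _ _ => trivial, ?_⟩, noblockN _ (by simp)⟩, ?_, ?_⟩
  · intro h
    by_cases hv : h.val = n
    · rw [cardN_last n h hv]; omega
    · rw [cardN_lt n h hv]; simp [I18, hv]
  · intro h
    rw [cardM]
    by_cases hv : h.val = n <;> simp [I18, hv]
  · unfold HRTInstance.score
    have : ∀ h : Fin (n+1),
        (if (I18 n).lq h = 0 then (1:ℚ)
         else min 1 (((HRTInstance.assignees (fun r : Fin n => some r.castSucc) h).card : ℚ) / ((I18 n).lq h : ℚ))) = 1 := by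
      intro h
      by_cases hv : h.val = n
      · simp [I18, hv]
      · rw [cardN_lt n h hv]; simp [I18, hv]
    rw [Finset.sum_congr rfl (fun h _ => this h)]
    simp
  · unfold HRTInstance.score
    have : ∀ h : Fin (n+1),
        (if (I18 n).lq h = 0 then (1:ℚ)
         else min 1 (((HRTInstance.assignees (fun _ : Fin n => some (Fin.last n)) h).card : ℚ) / ((I18 n).lq h : ℚ))) = if h.val = n then 1 else 0 := by
      intro h
      rw [cardM]
      by_cases hv : h.val = n <;> simp [I18, hv]
    rw [Finset.sum_congr rfl (fun h _ => this h)]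
    have h2 : ∀ h : Fin (n+1), (if (h:ℕ) = n then (1:ℚ) else 0) = if h = Fin.last n then 1 else 0 := by
      intro h; simp [Fin.ext_iff, Fin.last]
    rw [Finset.sum_congr rfl (fun h _ => h2 h)]
    simp
end
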